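/- arXiv:2410.14962 — 4 statements merged into one kernel-verified Lean document; each statement's English description precedes it below -/
import Mathlib

section
/- Let C be a pointed closed convex cone in ℝⁿ with nonempty interior and let E be a C-pseudo-cone. Then E is a C-asymptotic set if and only if h_E(v) = 0 for all v ∈ S^{n−1} ∩ ∂C°, where h_E(v) = sup_{x ∈ E} ⟨x, v⟩. -/
open Set MeasureTheory Metric Bornology
open scoped InnerProductSpace ENNReal NNReal Pointwise

noncomputable section

/-- A pointed closed convex cone with nonempty interior in `ℝⁿ`. -/
def IsPointedClosedConvexCone {n : ℕ} (C : Set (EuclideanSpace ℝ (Fin n))) : Prop :=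
  IsClosed C ∧ Convex ℝ C ∧ (interior C).Nonempty ∧
    (∀ l : ℝ, 0 ≤ l → ∀ x ∈ C, l • x ∈ C) ∧ C ∩ (-C) = {0}

/-- The recession cone of a set. -/
def recCone {n : ℕ} (E : Set (EuclideanSpace ℝ (Fin n))) : Set (EuclideanSpace ℝ (Fin n)) :=
  {x | ∀ y ∈ E, y + x ∈ E}

/-- A pseudo-cone: a nonempty closed convex set not containing the origin, closed under
dilations by factors `≥ 1`. -/
def IsPseudoCone {n : ℕ} (E : Set (EuclideanSpace ℝ (Fin n))) : Prop :=
  E.Nonempty ∧ IsClosed E ∧ Convex ℝ E ∧ (0 : EuclideanSpace ℝ (Fin n)) ∉ E ∧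
    ∀ l : ℝ, 1 ≤ l → ∀ x ∈ E, l • x ∈ E

/-- A `C`-pseudo-cone: a pseudo-cone contained in `C` with recession cone `C`. -/
def IsCPseudoCone {n : ℕ} (C E : Set (EuclideanSpace ℝ (Fin n))) : Prop :=
  IsPseudoCone E ∧ E ⊆ C ∧ recCone E = C

/-- The polar cone of `C`. -/
def polarCone {n : ℕ} (C : Set (EuclideanSpace ℝ (Fin n))) : Set (EuclideanSpace ℝ (Fin n)) :=
  {y | ∀ x ∈ C, ⟪x, y⟫_ℝ ≤ 0}

/-- The support function of a set. -/
def suppFn {n : ℕ} (E : Set (EuclideanSpace ℝ (Fin n))) (v : EuclideanSpace ℝ (Fin n)) : ℝ :=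
  sSup ((fun x => ⟪x, v⟫_ℝ) '' E)

/-- A `C`-asymptotic set: an unbounded closed convex subset of `C` avoiding the origin whose
boundary is asymptotic to the boundary of `C` at infinity. -/
def IsCAsymptotic {n : ℕ} (C A : Set (EuclideanSpace ℝ (Fin n))) : Prop :=
  A ⊆ C ∧ (0 : EuclideanSpace ℝ (Fin n)) ∉ A ∧ IsClosed A ∧ Convex ℝ A ∧
    ¬ IsBounded A ∧
    ∀ ε > 0, ∃ R > 0, ∀ x ∈ frontier A, R ≤ ‖x‖ → infDist x (frontier C) < ε

/-- The radial function of a set. -/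
def radialFn {n : ℕ} (E : Set (EuclideanSpace ℝ (Fin n))) (u : EuclideanSpace ℝ (Fin n)) : ℝ :=
  sInf {r : ℝ | 0 < r ∧ r • u ∈ E}

/-!
If `v ∈ S^{n-1} ∩ ∂C°`, some unit `u ∈ C` has `⟪u, v⟫ = 0`. Suppose `h_E(v) = -c < 0` and fix
`e ∈ E` with `ball e γ ⊆ C`. For large `t`, the first point `x = t u + a e` of `E` on the segment
from `t u` to `t u + e` is a far boundary point of `E`; since `a ⟪e, v⟫ = ⟪x, v⟫ ≤ -c`, `a` is
bounded below, and `ball x (a γ) ⊆ t u + a • ball e γ ⊆ C` keeps `x` away from `∂C`.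

Conversely, at a far boundary point `x` of `E` with `dist(x, ∂C) ≥ ε`, a unit outer normal `v` lies
in `C°` and `h_E(v) ≤ ⟪x, v⟫ ≤ -ε/2`. As `h_E` vanishes on `S^{n-1} ∩ ∂C°`, such `v` lie in the
interior of `C°`, uniformly by compactness: `⟪x, v⟫ ≤ -m ‖x‖`. But `⟪x, v⟫ ≥ ⟪y, v⟫ ≥ -‖y‖` for a
fixed `y ∈ E`, which bounds `‖x‖`.
-/

theorem csInf_mem_frontier {α : Type*} [ConditionallyCompleteLinearOrder α] [TopologicalSpace α]
    [OrderTopology α] [DenselyOrdered α] [NoMinOrder α] {A : Set α} (hne : A.Nonempty)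
    (hbdd : BddBelow A) : sInf A ∈ frontier A := by
  rw [frontier_eq_closure_inter_closure]
  refine ⟨csInf_mem_closure hne hbdd, closure_mono (s := Iio (sInf A))
    (fun a ha => notMem_of_lt_csInf ha hbdd) ?_⟩
  rw [closure_Iio]
  exact mem_Iic.2 le_rfl

theorem le_infDist_frontier_of_ball_subset {X : Type*} [PseudoMetricSpace X] {C : Set X} {x : X}
    {r : ℝ} (hne : (frontier C).Nonempty) (h : ball x r ⊆ C) : r ≤ infDist x (frontier C) := by
  rw [le_infDist hne]
  intro z hz
  by_contra! hzr
  exact hz.2 (interior_maximal h isOpen_ball (mem_ball'.2 hzr))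

section NormedSpace

variable {X : Type*} [NormedAddCommGroup X] [NormedSpace ℝ X]

theorem exists_add_smul_mem_frontier {E : Set X} {p e : X} {a₁ b : ℝ}
    (h₁ : p + a₁ • e ∈ E) (hb : ∀ a : ℝ, p + a • e ∈ E → b ≤ a) :
    ∃ a ∈ Icc b a₁, p + a • e ∈ frontier E := by
  have hcont : Continuous fun a : ℝ => p + a • e := by fun_prop
  have hne : ((fun a : ℝ => p + a • e) ⁻¹' E).Nonempty := ⟨a₁, h₁⟩
  have hbdd : BddBelow ((fun a : ℝ => p + a • e) ⁻¹' E) := ⟨b, hb⟩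
  exact ⟨_, ⟨le_csInf hne hb, csInf_le hbdd h₁⟩,
    hcont.frontier_preimage_subset E (csInf_mem_frontier hne hbdd)⟩

theorem ball_subset_of_le_infDist_frontier {C : Set X} {x : X} {r : ℝ} (hx : x ∈ C)
    (hr : r ≤ infDist x (frontier C)) : ball x r ⊆ C := by
  rcases le_or_gt r 0 with hr0 | hr0
  · simp [ball_eq_empty.2 hr0]
  have hball : ball x r ⊆ (frontier C)ᶜ :=
    (ball_subset_ball hr).trans ball_infDist_subset_compl
  have hxint : x ∈ interior C := by
    by_contra h
    exact hball (mem_ball_self hr0) ⟨subset_closure hx, h⟩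
  refine ((convex_ball x r).isPreconnected.subset_of_closure_inter_subset isOpen_interior
    ⟨x, mem_ball_self hr0, hxint⟩ ?_).trans interior_subset
  rintro z ⟨hzcl, hz⟩
  by_contra hzint
  exact hball hz ⟨closure_mono interior_subset hzcl, hzint⟩

end NormedSpace

section InnerProductSpace

variable {F : Type*} [NormedAddCommGroup F] [InnerProductSpace ℝ F]

theorem inner_le_neg_mul_norm_of_forall_mem_ball {w y : F} {r s : ℝ}
    (h : ∀ z ∈ ball y r, ⟪w, z⟫_ℝ ≤ 0) (hs : 0 ≤ s) (hsr : s < r) :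
    ⟪w, y⟫_ℝ ≤ -(s * ‖w‖) := by
  rcases eq_or_ne w 0 with rfl | hw
  · simp
  have hw' : 0 < ‖w‖ := norm_pos_iff.2 hw
  have hz : y + (s / ‖w‖) • w ∈ ball y r := by
    rwa [mem_ball, dist_self_add_left, norm_smul, Real.norm_of_nonneg (by positivity),
      div_mul_cancel₀ _ hw'.ne']
  have h' := h _ hz
  rw [inner_add_right, real_inner_smul_right, real_inner_self_eq_norm_sq] at h'
  have : s / ‖w‖ * ‖w‖ ^ 2 = s * ‖w‖ := by field_simp
  linarith

theorem inner_le_neg_mul_norm_of_forall_norm_eq_one {C : Set F}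
    (hsmul : ∀ l : ℝ, 0 ≤ l → ∀ x ∈ C, l • x ∈ C) {v : F} {m : ℝ}
    (h : ∀ u ∈ C, ‖u‖ = 1 → ⟪u, v⟫_ℝ ≤ -m) {x : F} (hx : x ∈ C) :
    ⟪x, v⟫_ℝ ≤ -(m * ‖x‖) := by
  rcases eq_or_ne x 0 with rfl | hx0
  · simp
  have hxpos : 0 < ‖x‖ := norm_pos_iff.2 hx0
  have hu := h _ (hsmul ‖x‖⁻¹ (by positivity) x hx)
    (by rw [norm_smul, norm_inv, norm_norm, inv_mul_cancel₀ hxpos.ne'])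
  rw [real_inner_smul_left] at hu
  calc ⟪x, v⟫_ℝ = ‖x‖ * (‖x‖⁻¹ * ⟪x, v⟫_ℝ) := by field_simp
    _ ≤ ‖x‖ * -m := by gcongr
    _ = -(m * ‖x‖) := by ring

theorem exists_norm_eq_one_forall_inner_le [CompleteSpace F] {A : Set F} {x : F}
    (hA : Convex ℝ A) (hAint : (interior A).Nonempty) (hx : x ∉ interior A) :
    ∃ v : F, ‖v‖ = 1 ∧ ∀ a ∈ A, ⟪a, v⟫_ℝ ≤ ⟪x, v⟫_ℝ := by
  obtain ⟨f, hf0, hf⟩ := geometric_hahn_banach_of_nonempty_interior_point hA hx hAint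
  set w := (InnerProductSpace.toDual ℝ F).symm f
  have hw : w ≠ 0 := by simpa [w] using hf0
  have hfw : ∀ z, f z = ⟪z, w⟫_ℝ := fun z => by
    rw [real_inner_comm, InnerProductSpace.toDual_symm_apply]
  refine ⟨‖w‖⁻¹ • w, ?_, fun a ha => ?_⟩
  · rw [norm_smul, norm_inv, norm_norm, inv_mul_cancel₀ (norm_ne_zero_iff.2 hw)]
  · simp only [real_inner_smul_right, ← hfw]
    exact mul_le_mul_of_nonneg_left (hf a ha) (by positivity)

end InnerProductSpace

section PolarCone

variable {n : ℕ} {C : Set (EuclideanSpace ℝ (Fin n))} {v : EuclideanSpace ℝ (Fin n)}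

theorem isClosed_polarCone : IsClosed (polarCone C) := by
  have h : polarCone C = ⋂ x ∈ C, {y | ⟪x, y⟫_ℝ ≤ 0} := by
    ext
    simp [polarCone]
  rw [h]
  exact isClosed_biInter fun x _ => isClosed_le (by fun_prop) continuous_const

theorem mem_interior_polarCone_iff :
    v ∈ interior (polarCone C) ↔ ∃ m > 0, ∀ x ∈ C, ⟪x, v⟫_ℝ ≤ -(m * ‖x‖) := by
  constructor
  · intro hv
    obtain ⟨δ, hδ, hball⟩ := Metric.mem_nhds_iff.1 (mem_interior_iff_mem_nhds.1 hv)
    exact ⟨δ / 2, by positivity, fun x hx => inner_le_neg_mul_norm_of_forall_mem_ball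
      (fun z hz => hball hz x hx) (by positivity) (by linarith)⟩
  · rintro ⟨m, hm, hv⟩
    refine interior_maximal (fun y hy x hx => ?_) isOpen_ball (mem_ball_self hm)
    have hyv : ‖y - v‖ < m := by rwa [mem_ball, dist_eq_norm] at hy
    calc ⟪x, y⟫_ℝ = ⟪x, v⟫_ℝ + ⟪x, y - v⟫_ℝ := by rw [inner_sub_right]; ring
      _ ≤ -(m * ‖x‖) + ‖x‖ * ‖y - v‖ := add_le_add (hv x hx) (real_inner_le_norm _ _)
      _ ≤ 0 := by nlinarith [norm_nonneg x]

theorem mem_frontier_polarCone_iff (hcl : IsClosed C)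
    (hsmul : ∀ l : ℝ, 0 ≤ l → ∀ x ∈ C, l • x ∈ C) :
    v ∈ frontier (polarCone C) ↔ v ∈ polarCone C ∧ ∃ u ∈ C, ‖u‖ = 1 ∧ ⟪u, v⟫_ℝ = 0 := by
  rw [isClosed_polarCone.frontier_eq, mem_sdiff, mem_interior_polarCone_iff]
  refine and_congr_right fun hv => ⟨fun hint => ?_, ?_⟩
  · by_contra! hne
    have hneg : ∀ u ∈ C ∩ sphere 0 1, 0 < -⟪u, v⟫_ℝ := fun u hu => neg_pos.2 <|
      (hv u hu.1).lt_of_ne (hne u hu.1 (mem_sphere_zero_iff_norm.1 hu.2))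
    obtain ⟨m, hm, hmle⟩ :=
      ((isCompact_sphere 0 1).inter_left hcl).exists_forall_le' (by fun_prop) hneg
    refine hint ⟨m, hm, fun x hx => inner_le_neg_mul_norm_of_forall_norm_eq_one hsmul
      (fun u hu hu1 => ?_) hx⟩
    linarith [hmle u ⟨hu, mem_sphere_zero_iff_norm.2 hu1⟩]
  · rintro ⟨u, hu, hu1, huv⟩ ⟨m, hm, hmv⟩
    have h := hmv u hu
    rw [huv, hu1] at h
    linarith

end PolarCone

section PseudoCone

variable {n : ℕ} {C E : Set (EuclideanSpace ℝ (Fin n))} {v x y : EuclideanSpace ℝ (Fin n)}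

theorem IsPointedClosedConvexCone.smul_mem (hC : IsPointedClosedConvexCone C) {l : ℝ}
    (hl : 0 ≤ l) (hx : x ∈ C) : l • x ∈ C :=
  hC.2.2.2.1 l hl x hx

theorem IsPointedClosedConvexCone.add_mem (hC : IsPointedClosedConvexCone C) (hx : x ∈ C)
    (hy : y ∈ C) : x + y ∈ C := by
  have h := hC.smul_mem zero_le_two (hC.2.1 hx hy one_half_pos.le one_half_pos.le (add_halves 1))
  rwa [smul_add, smul_smul, smul_smul, mul_one_div_cancel two_ne_zero, one_smul, one_smul] at h

theorem IsPointedClosedConvexCone.frontier_nonempty (hC : IsPointedClosedConvexCone C)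
    (hx : x ∈ C) (hx0 : x ≠ 0) : (frontier C).Nonempty := by
  refine nonempty_frontier_iff.2 ⟨⟨x, hx⟩, fun hCu => hx0 ?_⟩
  have h : x ∈ C ∩ -C := ⟨hx, by rw [hCu, neg_univ]; trivial⟩
  rwa [hC.2.2.2.2] at h

theorem IsPointedClosedConvexCone.ball_add_smul_subset (hC : IsPointedClosedConvexCone C)
    {e : EuclideanSpace ℝ (Fin n)} {γ a : ℝ} (hx : x ∈ C) (he : ball e γ ⊆ C) (ha : 0 < a) :
    ball (x + a • e) (a * γ) ⊆ C := by
  intro z hz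
  have hw : e + a⁻¹ • (z - (x + a • e)) ∈ ball e γ := by
    rw [mem_ball, dist_self_add_left, norm_smul, Real.norm_of_nonneg (inv_nonneg.2 ha.le),
      inv_mul_lt_iff₀ ha, ← dist_eq_norm]
    exact hz
  have hz' : z = x + a • (e + a⁻¹ • (z - (x + a • e))) := by
    rw [smul_add, smul_inv_smul₀ ha.ne']
    abel
  rw [hz']
  exact hC.add_mem hx (hC.smul_mem ha.le (he hw))

theorem IsPseudoCone.not_isBounded (hE : IsPseudoCone E) : ¬ IsBounded E := by
  intro hb
  obtain ⟨y, hy⟩ := hE.1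
  obtain ⟨B, hB⟩ := isBounded_iff_forall_norm_le.1 hb
  have hy0 : 0 < ‖y‖ := norm_pos_iff.2 fun h => hE.2.2.2.1 (h ▸ hy)
  set l := max 1 ((B + 1) / ‖y‖)
  have hl : B + 1 ≤ l * ‖y‖ := (div_le_iff₀ hy0).1 (le_max_right _ _)
  have h := hB _ (hE.2.2.2.2 l (le_max_left _ _) y hy)
  rw [norm_smul, Real.norm_of_nonneg (zero_le_one.trans (le_max_left _ _))] at h
  linarith

theorem suppFn_le (hne : E.Nonempty) {c : ℝ} (h : ∀ x ∈ E, ⟪x, v⟫_ℝ ≤ c) : suppFn E v ≤ c :=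
  csSup_le (hne.image _) (by rintro _ ⟨x, hx, rfl⟩; exact h x hx)

theorem inner_le_suppFn (hEC : E ⊆ C) (hv : v ∈ polarCone C) (hx : x ∈ E) :
    ⟪x, v⟫_ℝ ≤ suppFn E v :=
  le_csSup ⟨0, by rintro _ ⟨y, hy, rfl⟩; exact hv y (hEC hy)⟩ (mem_image_of_mem _ hx)

theorem IsCPseudoCone.add_mem (hE : IsCPseudoCone C E) (hy : y ∈ E) (hx : x ∈ C) : y + x ∈ E := by
  rw [← hE.2.2] at hx
  exact hx y hy

theorem IsCPseudoCone.exists_ball_subset (hCint : (interior C).Nonempty)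
    (hE : IsCPseudoCone C E) : ∃ e, ∃ γ > 0, ball e γ ⊆ E := by
  obtain ⟨y, hy⟩ := hE.1.1
  obtain ⟨p, hp⟩ := hCint
  obtain ⟨γ, hγ, hball⟩ := Metric.isOpen_iff.1 isOpen_interior p hp
  refine ⟨y + p, γ, hγ, fun z hz => ?_⟩
  have hzp : z - y ∈ ball p γ := by
    rw [mem_ball, dist_eq_norm, sub_sub, ← dist_eq_norm]
    exact hz
  simpa using hE.add_mem hy (interior_subset (hball hzp))

theorem IsCPseudoCone.mem_polarCone_of_forall_inner_le (hE : IsCPseudoCone C E) (hx : x ∈ E)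
    (h : ∀ a ∈ E, ⟪a, v⟫_ℝ ≤ ⟪x, v⟫_ℝ) : v ∈ polarCone C := fun w hw => by
  have h' := h _ (hE.add_mem hx hw)
  rw [inner_add_left] at h'
  linarith

end PseudoCone

section Asymptotic

variable {n : ℕ} {C E : Set (EuclideanSpace ℝ (Fin n))} {u v : EuclideanSpace ℝ (Fin n)}

theorem IsCPseudoCone.exists_mem_frontier_ball_subset (hC : IsPointedClosedConvexCone C)
    (hE : IsCPseudoCone C E) (hu : u ∈ C) (hu1 : ‖u‖ = 1) (huv : ⟪u, v⟫_ℝ = 0) {c : ℝ}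
    (hc : 0 < c) (hEv : ∀ x ∈ E, ⟪x, v⟫_ℝ ≤ -c) :
    ∃ δ > 0, ∀ R : ℝ, ∃ x ∈ frontier E, R ≤ ‖x‖ ∧ ball x δ ⊆ C := by
  obtain ⟨e, γ, hγ, heE⟩ := hE.exists_ball_subset hC.2.2.1
  have he : e ∈ E := heE (mem_ball_self hγ)
  have hev : 0 < -⟪e, v⟫_ℝ := by linarith [hEv e he]
  refine ⟨c / -⟪e, v⟫_ℝ * γ, by positivity, fun R => ?_⟩
  set p := (|R| + ‖e‖) • u
  have hp : p ∈ C := hC.smul_mem (by positivity) hu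
  have hline : ∀ a : ℝ, p + a • e ∈ E → c / -⟪e, v⟫_ℝ ≤ a := by
    intro a ha
    have h := hEv _ ha
    rw [inner_add_left, real_inner_smul_left, real_inner_smul_left, huv, mul_zero,
      zero_add] at h
    rw [div_le_iff₀ hev]
    linarith
  have h₁ : p + (1 : ℝ) • e ∈ E := by
    simpa [add_comm] using hE.add_mem he hp
  obtain ⟨a, ⟨hba, ha1⟩, hfr⟩ := exists_add_smul_mem_frontier h₁ hline
  have ha : 0 < a := lt_of_lt_of_le (by positivity) hba
  refine ⟨_, hfr, ?_, (ball_subset_ball (mul_le_mul_of_nonneg_right hba hγ.le)).trans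
    (hC.ball_add_smul_subset hp (heE.trans hE.2.1) ha)⟩
  have hpn : ‖p‖ = |R| + ‖e‖ := by
    rw [norm_smul, hu1, mul_one, Real.norm_of_nonneg (by positivity)]
  have hae : ‖a • e‖ ≤ ‖e‖ := by
    rw [norm_smul, Real.norm_of_nonneg ha.le]
    exact mul_le_of_le_one_left (norm_nonneg e) ha1
  have htri : ‖p‖ ≤ ‖p + a • e‖ + ‖a • e‖ := by
    simpa using norm_sub_le (p + a • e) (a • e)
  linarith [le_abs_self R]

theorem IsCAsymptotic.suppFn_eq_zero (hC : IsPointedClosedConvexCone C)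
    (hE : IsCPseudoCone C E) (hA : IsCAsymptotic C E) (hv : v ∈ frontier (polarCone C)) :
    suppFn E v = 0 := by
  obtain ⟨hvpol, u, hu, hu1, huv⟩ := (mem_frontier_polarCone_iff hC.1 hC.2.2.2.1).1 hv
  have hle : suppFn E v ≤ 0 := suppFn_le hE.1.1 fun x hx => hvpol x (hE.2.1 hx)
  by_contra hne
  obtain ⟨δ, hδ, hdeep⟩ := hE.exists_mem_frontier_ball_subset hC hu hu1 huv
    (neg_pos.2 (hle.lt_of_ne hne)) fun x hx => by linarith [inner_le_suppFn hE.2.1 hvpol hx]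
  obtain ⟨R, -, hR⟩ := hA.2.2.2.2.2 δ hδ
  obtain ⟨x, hx, hRx, hball⟩ := hdeep R
  have hfar := le_infDist_frontier_of_ball_subset
    (hC.frontier_nonempty hu (by rintro rfl; simp at hu1)) hball
  linarith [hR x hx hRx]

theorem exists_pos_forall_inner_le_neg_mul_norm (hcl : IsClosed C)
    (hsmul : ∀ l : ℝ, 0 ≤ l → ∀ x ∈ C, l • x ∈ C) (hne : E.Nonempty)
    (H : ∀ v ∈ sphere (0 : EuclideanSpace ℝ (Fin n)) 1 ∩ frontier (polarCone C),
      suppFn E v = 0) {δ : ℝ} (hδ : 0 < δ) :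
    ∃ m > 0, ∀ v ∈ polarCone C, ‖v‖ = 1 → (∀ a ∈ E, ⟪a, v⟫_ℝ ≤ -δ) →
      ∀ x ∈ C, ⟪x, v⟫_ℝ ≤ -(m * ‖x‖) := by
  set V := polarCone C ∩ sphere 0 1 ∩ ⋂ a ∈ E, {v | ⟪a, v⟫_ℝ ≤ -δ}
  have hV : IsCompact V := ((isCompact_sphere 0 1).inter_left isClosed_polarCone).inter_right
    (isClosed_biInter fun a _ => isClosed_le (by fun_prop) continuous_const)
  have hK := ((isCompact_sphere (0 : EuclideanSpace ℝ (Fin n)) 1).inter_left hcl).prod hV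
  have hpos : ∀ q ∈ (C ∩ sphere 0 1) ×ˢ V, 0 < -⟪q.1, q.2⟫_ℝ := by
    rintro ⟨u, w⟩ ⟨⟨hu, hu1⟩, ⟨hw, hw1⟩, hwE⟩
    refine neg_pos.2 ((hw u hu).lt_of_ne fun huw => ?_)
    have hfr : w ∈ frontier (polarCone C) := (mem_frontier_polarCone_iff hcl hsmul).2
      ⟨hw, u, hu, mem_sphere_zero_iff_norm.1 hu1, huw⟩
    have h := suppFn_le hne fun a ha => mem_iInter₂.1 hwE a ha
    rw [H w ⟨hw1, hfr⟩] at h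
    linarith
  obtain ⟨m, hm, hmK⟩ := hK.exists_forall_le' (by fun_prop) hpos
  refine ⟨m, hm, fun v hv hv1 hvE x hx =>
    inner_le_neg_mul_norm_of_forall_norm_eq_one hsmul (fun u hu hu1 => ?_) hx⟩
  linarith [hmK (u, v) ⟨⟨hu, mem_sphere_zero_iff_norm.2 hu1⟩,
    ⟨hv, mem_sphere_zero_iff_norm.2 hv1⟩, mem_iInter₂.2 hvE⟩]

theorem IsCPseudoCone.exists_normal_mem_polarCone (hCint : (interior C).Nonempty)
    (hE : IsCPseudoCone C E) {x : EuclideanSpace ℝ (Fin n)} (hx : x ∈ frontier E) {ε : ℝ}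
    (hε : 0 < ε) (hball : ball x ε ⊆ C) :
    ∃ v ∈ polarCone C, ‖v‖ = 1 ∧ (∀ a ∈ E, ⟪a, v⟫_ℝ ≤ ⟪x, v⟫_ℝ) ∧ ⟪x, v⟫_ℝ ≤ -(ε / 2) := by
  obtain ⟨e, γ, hγ, heE⟩ := hE.exists_ball_subset hCint
  obtain ⟨v, hv1, hv⟩ := exists_norm_eq_one_forall_inner_le hE.1.2.2.1
    ⟨e, interior_maximal heE isOpen_ball (mem_ball_self hγ)⟩ hx.2
  have hvpol := hE.mem_polarCone_of_forall_inner_le (hE.1.2.1.frontier_subset hx) hv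
  refine ⟨v, hvpol, hv1, hv, ?_⟩
  have h := inner_le_neg_mul_norm_of_forall_mem_ball (w := v)
    (fun z hz => by rw [real_inner_comm]; exact hvpol z (hball hz)) (half_pos hε).le
    (half_lt_self hε)
  rwa [real_inner_comm, hv1, mul_one] at h

theorem isCAsymptotic_of_suppFn_eq_zero (hC : IsPointedClosedConvexCone C)
    (hE : IsCPseudoCone C E)
    (H : ∀ v ∈ sphere (0 : EuclideanSpace ℝ (Fin n)) 1 ∩ frontier (polarCone C),
      suppFn E v = 0) :
    IsCAsymptotic C E := by
  refine ⟨hE.2.1, hE.1.2.2.2.1, hE.1.2.1, hE.1.2.2.1, hE.1.not_isBounded, fun ε hε => ?_⟩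
  obtain ⟨y, hy⟩ := hE.1.1
  obtain ⟨m, hm, hmC⟩ :=
    exists_pos_forall_inner_le_neg_mul_norm hC.1 hC.2.2.2.1 ⟨y, hy⟩ H (half_pos hε)
  refine ⟨‖y‖ / m + 1, by positivity, fun x hx hRx => ?_⟩
  by_contra! hdist
  have hxC : x ∈ C := hE.2.1 (hE.1.2.1.frontier_subset hx)
  obtain ⟨v, hvpol, hv1, hv, hxv⟩ := hE.exists_normal_mem_polarCone hC.2.2.1 hx hε
    (ball_subset_of_le_infDist_frontier hxC hdist)
  have hxm := hmC v hvpol hv1 (fun a ha => (hv a ha).trans hxv) x hxC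
  have hyv : -‖y‖ ≤ ⟪y, v⟫_ℝ := by
    simpa [hv1] using neg_le_of_abs_le (abs_real_inner_le_norm y v)
  have hmx := mul_le_mul_of_nonneg_left hRx hm.le
  rw [mul_add, mul_div_cancel₀ _ hm.ne', mul_one] at hmx
  linarith [hv y hy]

end Asymptotic

theorem stmt4_general {n : ℕ} (C E : Set (EuclideanSpace ℝ (Fin n)))
    (hC : IsPointedClosedConvexCone C) (hE : IsCPseudoCone C E) :
    IsCAsymptotic C E ↔
      ∀ v ∈ sphere (0 : EuclideanSpace ℝ (Fin n)) 1 ∩ frontier (polarCone C),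
        suppFn E v = 0 :=
  ⟨fun hA _ hv => hA.suppFn_eq_zero hC hE hv.2, isCAsymptotic_of_suppFn_eq_zero hC hE⟩

theorem stmt4 {n : ℕ} (hn : 2 ≤ n) (C E : Set (EuclideanSpace ℝ (Fin n)))
    (hC : IsPointedClosedConvexCone C) (hE : IsCPseudoCone C E) :
    IsCAsymptotic C E ↔
      ∀ v ∈ sphere (0 : EuclideanSpace ℝ (Fin n)) 1 ∩ frontier (polarCone C),
        suppFn E v = 0 :=
  stmt4_general C E hC hE
end
end

section
/- Let C be a pointed closed convex cone in ℝⁿ with nonempty interior and let E be a C-pseudo-cone. For every u ∈ S^{n−1} ∩ int C the radial function ρ_E(u) = inf{r > 0 : ru ∈ E} is finite and ρ_E(u)·u ∈ E, and for every compact subset ω ⊆ S^{n−1} ∩ int C the radial map u ↦ ρ_E(u)·u is Lipschitz continuous on ω (i.e., there exists K ≥ 0 with |ρ_E(u₁)u₁ − ρ_E(u₂)u₂| ≤ K|u₁ − u₂| for all u₁, u₂ ∈ ω). -/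
open Set MeasureTheory Metric Bornology
open scoped InnerProductSpace ENNReal NNReal Pointwise

noncomputable section

/-!
Since `rec E = C`, we have `E + C ⊆ E`. Suppose the ball of radius `ε` about a direction `u` lies
in `C`. Then for every `s • x ∈ E` with `s ≥ 0`, the point `(s + δ) • u` lies in `E` whenever
`δ > s ‖x - u‖ / ε`: it is `s • x` plus `δ` times a point of that ball. This gives
`ρ_E(u) ≤ s + s ‖x - u‖ / ε`. With `s • x` a fixed point of `E`, this shows that the ray through
`u` meets `E` and that `ρ_E` is bounded on a compact `ω ⊆ int C`, where `ε` can be chosen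
uniformly. With `s • x = ρ_E(u₁) u₁`, it shows that `ρ_E` is Lipschitz on `ω`.
-/

section NormedSpace

variable {V : Type*} [NormedAddCommGroup V] [NormedSpace ℝ V]

/-- The witness is `(s + δ) • u = s • x + δ • v` with `v = u + (s / δ) • (u - x) ∈ ball u ε`. -/
theorem add_smul_mem_of_ball_subset {C E : Set V} (hC : ∀ l : ℝ, 0 ≤ l → ∀ c ∈ C, l • c ∈ C)
    (hE : ∀ x ∈ E, ∀ c ∈ C, x + c ∈ E) {x u : V} {s ε δ : ℝ} (hs : 0 ≤ s) (hx : s • x ∈ E)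
    (hε : 0 < ε) (hball : ball u ε ⊆ C) (hδ : s * ‖x - u‖ / ε < δ) : (s + δ) • u ∈ E := by
  have hδ0 : 0 < δ := lt_of_le_of_lt (by positivity) hδ
  set v := u + (s / δ) • (u - x)
  have hv : v ∈ ball u ε := by
    rw [mem_ball_iff_norm, add_sub_cancel_left, norm_smul, Real.norm_of_nonneg (by positivity),
      norm_sub_rev, div_mul_eq_mul_div, div_lt_iff₀ hδ0]
    rw [div_lt_iff₀ hε] at hδ
    linarith
  have hsum : s • x + δ • v = (s + δ) • u := by
    simp only [v, smul_add, smul_smul, mul_div_cancel₀ _ hδ0.ne']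
    module
  exact hsum ▸ hE _ hx _ (hC δ hδ0.le v (hball hv))

theorem norm_smul_sub_smul_le {u₁ u₂ : V} {a b M L : ℝ} (ha : 0 ≤ a) (haM : a ≤ M)
    (hab : |a - b| ≤ L * ‖u₁ - u₂‖) (hu₂ : ‖u₂‖ = 1) : ‖a • u₁ - b • u₂‖ ≤ (M + L) * ‖u₁ - u₂‖ :=
  calc ‖a • u₁ - b • u₂‖ = ‖a • (u₁ - u₂) + (a - b) • u₂‖ := by congr 1; module
    _ ≤ a * ‖u₁ - u₂‖ + |a - b| := by
        grw [norm_add_le, norm_smul, norm_smul, hu₂, Real.norm_of_nonneg ha, Real.norm_eq_abs,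
          mul_one]
    _ ≤ (M + L) * ‖u₁ - u₂‖ := by
        grw [hab, haM]
        linarith

end NormedSpace

section RadialFunction

variable {n : ℕ} {C E : Set (EuclideanSpace ℝ (Fin n))}

theorem radialFn_nonneg (u : EuclideanSpace ℝ (Fin n)) : 0 ≤ radialFn E u :=
  Real.sInf_nonneg fun _ hr => hr.1.le

theorem radialFn_le {u : EuclideanSpace ℝ (Fin n)} {r : ℝ} (hr : 0 < r) (hru : r • u ∈ E) :
    radialFn E u ≤ r :=
  csInf_le ⟨0, fun _ hr => hr.1.le⟩ ⟨hr, hru⟩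

theorem radialFn_smul_mem (hE : IsClosed E) {u : EuclideanSpace ℝ (Fin n)}
    (hu : ∃ r : ℝ, 0 < r ∧ r • u ∈ E) : radialFn E u • u ∈ E := by
  have hclosed : IsClosed {r : ℝ | r • u ∈ E} := hE.preimage (continuous_id.smul continuous_const)
  exact closure_minimal (fun r hr => hr.2) hclosed
    (csInf_mem_closure hu ⟨0, fun _ hr => hr.1.le⟩)

variable (hC : ∀ l : ℝ, 0 ≤ l → ∀ c ∈ C, l • c ∈ C) (hE : ∀ x ∈ E, ∀ c ∈ C, x + c ∈ E)
include hC hE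

theorem exists_pos_smul_mem_of_ball_subset {y u : EuclideanSpace ℝ (Fin n)} {ε : ℝ} (hy : y ∈ E)
    (hε : 0 < ε) (hball : ball u ε ⊆ C) : ∃ r : ℝ, 0 < r ∧ r • u ∈ E :=
  ⟨1 + (1 * ‖y - u‖ / ε + 1), by positivity,
    add_smul_mem_of_ball_subset hC hE zero_le_one (by rwa [one_smul]) hε hball (lt_add_one _)⟩

theorem radialFn_le_add_of_ball_subset {x u : EuclideanSpace ℝ (Fin n)} {s ε : ℝ} (hs : 0 ≤ s)
    (hx : s • x ∈ E) (hε : 0 < ε) (hball : ball u ε ⊆ C) :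
    radialFn E u ≤ s + s * ‖x - u‖ / ε := by
  refine le_of_forall_gt_imp_ge_of_dense fun r hr => ?_
  have hδ : s * ‖x - u‖ / ε < r - s := by linarith
  have hr0 : 0 < r := lt_of_le_of_lt (by positivity) hr
  simpa using radialFn_le hr0 (by simpa using add_smul_mem_of_ball_subset hC hE hs hx hε hball hδ)

theorem exists_lipschitz_radialFn_smul (hEcl : IsClosed E) {y : EuclideanSpace ℝ (Fin n)}
    (hy : y ∈ E) {ω : Set (EuclideanSpace ℝ (Fin n))} {ε : ℝ} (hε : 0 < ε)
    (hω : ω ⊆ sphere 0 1) (hball : ∀ u ∈ ω, ball u ε ⊆ C) :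
    ∃ K : ℝ, 0 ≤ K ∧ ∀ u₁ ∈ ω, ∀ u₂ ∈ ω,
      ‖radialFn E u₁ • u₁ - radialFn E u₂ • u₂‖ ≤ K * ‖u₁ - u₂‖ := by
  have hunit : ∀ u ∈ ω, ‖u‖ = 1 := fun u hu => mem_sphere_zero_iff_norm.mp (hω hu)
  set M := 1 + (‖y‖ + 1) / ε
  have hbound : ∀ u ∈ ω, radialFn E u ≤ M := fun u hu =>
    calc radialFn E u ≤ 1 + 1 * ‖y - u‖ / ε :=
          radialFn_le_add_of_ball_subset hC hE zero_le_one (by rwa [one_smul]) hε (hball u hu)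
      _ ≤ M := by grw [norm_sub_le, hunit u hu, one_mul]
  have hmem : ∀ u ∈ ω, radialFn E u • u ∈ E := fun u hu =>
    radialFn_smul_mem hEcl (exists_pos_smul_mem_of_ball_subset hC hE hy hε (hball u hu))
  have hle : ∀ u₁ ∈ ω, ∀ u₂ ∈ ω, radialFn E u₂ ≤ radialFn E u₁ + M / ε * ‖u₁ - u₂‖ :=
    fun u₁ hu₁ u₂ hu₂ =>
    calc radialFn E u₂ ≤ radialFn E u₁ + radialFn E u₁ * ‖u₁ - u₂‖ / ε :=
          radialFn_le_add_of_ball_subset hC hE (radialFn_nonneg u₁) (hmem u₁ hu₁) hε (hball u₂ hu₂)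
      _ ≤ radialFn E u₁ + M / ε * ‖u₁ - u₂‖ := by
          rw [mul_div_right_comm]
          gcongr
          exact hbound u₁ hu₁
  refine ⟨M + M / ε, by positivity, fun u₁ hu₁ u₂ hu₂ =>
    norm_smul_sub_smul_le (radialFn_nonneg u₁) (hbound u₁ hu₁) ?_ (hunit u₂ hu₂)⟩
  have h₁₂ := hle u₂ hu₂ u₁ hu₁
  rw [norm_sub_rev] at h₁₂
  rw [abs_sub_le_iff]
  constructor <;> linarith [hle u₁ hu₁ u₂ hu₂]

end RadialFunction

theorem stmt6_general {n : ℕ} (C E : Set (EuclideanSpace ℝ (Fin n)))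
    (hC : IsPointedClosedConvexCone C) (hE : IsCPseudoCone C E) :
    (∀ u ∈ sphere (0 : EuclideanSpace ℝ (Fin n)) 1 ∩ interior C,
      (∃ r : ℝ, 0 < r ∧ r • u ∈ E) ∧ radialFn E u • u ∈ E) ∧
    ∀ ω : Set (EuclideanSpace ℝ (Fin n)),
      ω ⊆ sphere (0 : EuclideanSpace ℝ (Fin n)) 1 ∩ interior C → IsCompact ω →
      ∃ K : ℝ, 0 ≤ K ∧ ∀ u₁ ∈ ω, ∀ u₂ ∈ ω,
        ‖radialFn E u₁ • u₁ - radialFn E u₂ • u₂‖ ≤ K * ‖u₁ - u₂‖ := by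
  obtain ⟨⟨⟨y, hy⟩, hEclosed, -, -, -⟩, -, hrec⟩ := hE
  have hcone : ∀ l : ℝ, 0 ≤ l → ∀ c ∈ C, l • c ∈ C := hC.2.2.2.1
  have hadd : ∀ x ∈ E, ∀ c ∈ C, x + c ∈ E := fun x hx c hc => (hrec ▸ hc : c ∈ recCone E) x hx
  refine ⟨fun u hu => ?_, fun ω hω hωc => ?_⟩
  · obtain ⟨ε, hε, hball⟩ := Metric.isOpen_iff.mp isOpen_interior u hu.2
    have hray := exists_pos_smul_mem_of_ball_subset hcone hadd hy hε (hball.trans interior_subset)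
    exact ⟨hray, radialFn_smul_mem hEclosed hray⟩
  · obtain ⟨ε, hε, hthick⟩ :=
      hωc.exists_thickening_subset_open isOpen_interior fun u hu => (hω hu).2
    exact exists_lipschitz_radialFn_smul hcone hadd hEclosed hy hε (hω.trans inter_subset_left)
      fun u hu => (ball_subset_thickening hu ε).trans (hthick.trans interior_subset)

theorem stmt6 {n : ℕ} (hn : 2 ≤ n) (C E : Set (EuclideanSpace ℝ (Fin n)))
    (hC : IsPointedClosedConvexCone C) (hE : IsCPseudoCone C E) :
    (∀ u ∈ sphere (0 : EuclideanSpace ℝ (Fin n)) 1 ∩ interior C,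
      (∃ r : ℝ, 0 < r ∧ r • u ∈ E) ∧ radialFn E u • u ∈ E) ∧
    ∀ ω : Set (EuclideanSpace ℝ (Fin n)),
      ω ⊆ sphere (0 : EuclideanSpace ℝ (Fin n)) 1 ∩ interior C → IsCompact ω →
      ∃ K : ℝ, 0 ≤ K ∧ ∀ u₁ ∈ ω, ∀ u₂ ∈ ω,
        ‖radialFn E u₁ • u₁ - radialFn E u₂ • u₂‖ ≤ K * ‖u₁ - u₂‖ :=
  stmt6_general C E hC hE
end
end

section
/- Let C be a pointed closed convex cone in ℝⁿ with nonempty interior, let q ∈ ℝ, let Θ : C ∖ {0} → (0, ∞) be a continuous function homogeneous of degree −q, and let E be a C-pseudo-cone. Then the weighted volume V_Θ(E) = ∫_E Θ(x) dH^n(x) is finite if q > n, and V_Θ(E) = +∞ if q ≤ n. -/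
open Set MeasureTheory Metric Bornology
open scoped InnerProductSpace ENNReal NNReal Pointwise

noncomputable section

/-!
By homogeneity `Θ x = ‖x‖ ^ (-q) Θ (x / ‖x‖)`, and `Θ` is bounded on the compact set
`C ∩ S^{n-1}`. Since `E` is closed and misses the origin, `‖x‖` is bounded below on `E`, so for
`q > n` the weight is dominated there by a multiple of `(1 + ‖x‖) ^ (-q)`, which is integrable.

For `q ≤ n`, `E` has interior points (it contains `e + int C`), hence contains a piece `A` of a
dyadic shell of positive measure. Being closed under dilations, `E` contains the pairwise disjoint
sets `2 ^ k • A`, and the change of variables `x ↦ 2 ^ k x` gives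
`V_Θ(2 ^ k • A) = 2 ^ (k (n - q)) V_Θ(A) ≥ V_Θ(A) > 0`; summing over `k` gives `V_Θ(E) = ∞`.
-/

open Module

section

variable {E : Type*} [NormedAddCommGroup E] [NormedSpace ℝ E]

theorem MeasureTheory.Measure.setLIntegral_comp_smul [MeasurableSpace E] [BorelSpace E]
    [FiniteDimensional ℝ E] (μ : Measure E) [μ.IsAddHaarMeasure]
    (f : E → ℝ≥0∞) {R : ℝ} (s : Set E) (hR : R ≠ 0) :
    ∫⁻ x in s, f (R • x) ∂μ = ENNReal.ofReal |(R ^ finrank ℝ E)⁻¹| * ∫⁻ x in R • s, f x ∂μ := by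
  let e : E ≃ᵐ E := (Homeomorph.smul (Units.mk0 R hR)).toMeasurableEquiv
  have hpre : e ⁻¹' (R • s) = s := by
    ext x; exact smul_mem_smul_set_iff₀ hR s x
  calc ∫⁻ x in s, f (R • x) ∂μ = ∫⁻ y in R • s, f y ∂μ.map e := by
        rw [e.restrict_map, lintegral_map_equiv, hpre]; rfl
    _ = _ := by
        change ∫⁻ y in R • s, f y ∂μ.map (R • ·) = _
        rw [map_addHaar_smul μ hR, Measure.restrict_smul, lintegral_smul_measure, smul_eq_mul]

theorem pairwise_disjoint_two_pow_smul {A : Set E} {a : ℝ} (ha : 0 ≤ a)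
    (hA : A ⊆ norm ⁻¹' Ico a (2 * a)) :
    Pairwise (Function.onFun Disjoint fun k : ℕ => (2 : ℝ) ^ k • A) := by
  have hshell (k : ℕ) : (2 : ℝ) ^ k • A ⊆ norm ⁻¹' Ico (a * 2 ^ k) (a * 2 ^ (k + 1)) := by
    rintro _ ⟨y, hy, rfl⟩
    obtain ⟨h1, h2⟩ := hA hy
    simp only [mem_preimage, mem_Ico, norm_smul,
      Real.norm_of_nonneg (by positivity : (0 : ℝ) ≤ 2 ^ k)]
    rw [pow_succ]
    constructor <;> nlinarith [(by positivity : (0 : ℝ) < 2 ^ k)]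
  have hmono : Monotone fun k : ℕ => a * 2 ^ k := fun i j hij =>
    mul_le_mul_of_nonneg_left (pow_le_pow_right₀ one_le_two hij) ha
  intro i j hij
  exact ((hmono.pairwise_disjoint_on_Ico_succ hij).preimage norm).mono (hshell i) (hshell j)

theorem setLIntegral_ofReal_pos {α : Type*} [TopologicalSpace α] [MeasurableSpace α]
    [OpensMeasurableSpace α] {μ : Measure α} [μ.IsOpenPosMeasure] {f : α → ℝ} {s : Set α}
    (hs : MeasurableSet s) (hf : ContinuousOn f s) (hpos : ∀ x ∈ s, 0 < f x)
    (hint : (interior s).Nonempty) : 0 < ∫⁻ x in s, ENNReal.ofReal (f x) ∂μ := by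
  refine pos_iff_ne_zero.2 fun h => ?_
  rw [setLIntegral_eq_zero_iff' hs (hf.aemeasurable hs).ennreal_ofReal] at h
  have hs0 : μ s = 0 := measure_eq_zero_iff_ae_notMem.2 <| h.mono fun x hx hxs =>
    (ENNReal.ofReal_pos.2 (hpos x hxs)).ne' (hx hxs)
  exact (isOpen_interior.measure_pos μ hint).ne' (measure_mono_null interior_subset hs0)

section Homogeneous

variable {C s : Set E} {Θ : E → ℝ} {q : ℝ}

theorem exists_le_mul_norm_rpow_of_homogeneous [ProperSpace E] (hC : IsClosed C)
    (hCcone : ∀ l : ℝ, 0 ≤ l → ∀ x ∈ C, l • x ∈ C) (hΘcont : ContinuousOn Θ (C \ {0}))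
    (hΘhom : ∀ l : ℝ, 0 < l → ∀ x ∈ C \ {0}, Θ (l • x) = l ^ (-q) * Θ x) :
    ∃ M, ∀ x ∈ C \ {0}, Θ x ≤ M * ‖x‖ ^ (-q) := by
  have hS : C ∩ sphere 0 1 ⊆ C \ {0} := fun u ⟨huC, hu⟩ => ⟨huC, by rintro rfl; simp at hu⟩
  obtain ⟨M, hM⟩ := ((isCompact_sphere 0 1).inter_left hC).bddAbove_image (hΘcont.mono hS)
  refine ⟨M, fun x hx => ?_⟩
  have hx0 : 0 < ‖x‖ := norm_pos_iff.2 hx.2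
  set u := ‖x‖⁻¹ • x
  have hu : u ∈ C ∩ sphere 0 1 :=
    ⟨hCcone _ (inv_nonneg.2 hx0.le) x hx.1, by simp [u, norm_smul, hx0.ne']⟩
  calc Θ x = ‖x‖ ^ (-q) * Θ u := by rw [← hΘhom _ hx0 u (hS hu), smul_inv_smul₀ hx0.ne']
    _ ≤ M * ‖x‖ ^ (-q) := by
      rw [mul_comm]
      exact mul_le_mul_of_nonneg_right (hM ⟨u, hu, rfl⟩) (by positivity)

variable [MeasurableSpace E] [BorelSpace E] [FiniteDimensional ℝ E] (μ : Measure E)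
  [μ.IsAddHaarMeasure]

theorem setLIntegral_norm_rpow_neg_lt_top {δ : ℝ} (hδ : 0 < δ) (hq : (finrank ℝ E : ℝ) < q) :
    ∫⁻ x in (ball 0 δ)ᶜ, ENNReal.ofReal (‖x‖ ^ (-q)) ∂μ < ∞ := by
  have hq0 : 0 < q := (Nat.cast_nonneg _).trans_lt hq
  set K := 1 + δ⁻¹
  have hbound : ∀ x ∈ (ball (0 : E) δ)ᶜ, ‖x‖ ^ (-q) ≤ K ^ q * (1 + ‖x‖) ^ (-q) := by
    intro x hx
    have hδx : δ ≤ ‖x‖ := by simpa using hx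
    have hle : (1 + ‖x‖) / K ≤ ‖x‖ := by
      have : 1 ≤ ‖x‖ * δ⁻¹ := by rwa [← div_eq_mul_inv, one_le_div hδ]
      rw [div_le_iff₀ (by positivity)]
      linarith [mul_add ‖x‖ 1 δ⁻¹]
    calc ‖x‖ ^ (-q) ≤ ((1 + ‖x‖) / K) ^ (-q) :=
          Real.rpow_le_rpow_of_nonpos (by positivity) hle (by linarith)
      _ = K ^ q * (1 + ‖x‖) ^ (-q) := by
          rw [Real.div_rpow (by positivity) (by positivity), Real.rpow_neg (x := K) (by positivity),
            div_inv_eq_mul, mul_comm]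
  calc ∫⁻ x in (ball 0 δ)ᶜ, ENNReal.ofReal (‖x‖ ^ (-q)) ∂μ
      ≤ ∫⁻ x, ENNReal.ofReal (K ^ q) * ENNReal.ofReal ((1 + ‖x‖) ^ (-q)) ∂μ := by
        refine (setLIntegral_mono' measurableSet_ball.compl fun x hx => ?_).trans
          (setLIntegral_le_lintegral _ _)
        rw [← ENNReal.ofReal_mul (by positivity)]
        exact ENNReal.ofReal_le_ofReal (hbound x hx)
    _ = ENNReal.ofReal (K ^ q) * ∫⁻ x, ENNReal.ofReal ((1 + ‖x‖) ^ (-q)) ∂μ :=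
        lintegral_const_mul' _ _ ENNReal.ofReal_ne_top
    _ < ∞ := ENNReal.mul_lt_top ENNReal.ofReal_lt_top (finite_integral_one_add_norm hq)

theorem setLIntegral_lt_top_of_homogeneous (hC : IsClosed C)
    (hCcone : ∀ l : ℝ, 0 ≤ l → ∀ x ∈ C, l • x ∈ C) (hΘcont : ContinuousOn Θ (C \ {0}))
    (hΘhom : ∀ l : ℝ, 0 < l → ∀ x ∈ C \ {0}, Θ (l • x) = l ^ (-q) * Θ x)
    (hq : (finrank ℝ E : ℝ) < q) (hs : IsClosed s) (hsC : s ⊆ C) (hs0 : (0 : E) ∉ s) :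
    ∫⁻ x in s, ENNReal.ofReal (Θ x) ∂μ < ∞ := by
  obtain ⟨M, hM⟩ := exists_le_mul_norm_rpow_of_homogeneous hC hCcone hΘcont hΘhom
  obtain ⟨δ, hδ, hball⟩ := Metric.isOpen_iff.1 hs.isOpen_compl 0 hs0
  calc ∫⁻ x in s, ENNReal.ofReal (Θ x) ∂μ
      ≤ ∫⁻ x in (ball 0 δ)ᶜ, ENNReal.ofReal M * ENNReal.ofReal (‖x‖ ^ (-q)) ∂μ := by
        refine (setLIntegral_mono' hs.measurableSet fun x hx => ?_).trans
          (lintegral_mono_set (subset_compl_comm.1 hball))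
        rw [← ENNReal.ofReal_mul' (by positivity)]
        exact ENNReal.ofReal_le_ofReal (hM x ⟨hsC hx, fun h => hs0 (h ▸ hx)⟩)
    _ = ENNReal.ofReal M * ∫⁻ x in (ball 0 δ)ᶜ, ENNReal.ofReal (‖x‖ ^ (-q)) ∂μ :=
        lintegral_const_mul' _ _ ENNReal.ofReal_ne_top
    _ < ∞ := ENNReal.mul_lt_top ENNReal.ofReal_lt_top (setLIntegral_norm_rpow_neg_lt_top μ hδ hq)

theorem setLIntegral_smul_set_of_homogeneous {A : Set E} {t : ℝ} (ht : 0 < t)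
    (hA : MeasurableSet A) (hΘhom : ∀ x ∈ A, Θ (t • x) = t ^ (-q) * Θ x) :
    ∫⁻ x in t • A, ENNReal.ofReal (Θ x) ∂μ =
      ENNReal.ofReal (t ^ ((finrank ℝ E : ℝ) - q)) * ∫⁻ x in A, ENNReal.ofReal (Θ x) ∂μ := by
  have h := μ.setLIntegral_comp_smul (fun x => ENNReal.ofReal (Θ x)) A ht.ne'
  rw [setLIntegral_congr_fun hA fun x hx => by
      rw [hΘhom x hx, ENNReal.ofReal_mul (by positivity)],
    lintegral_const_mul' _ _ ENNReal.ofReal_ne_top, abs_of_pos (by positivity)] at h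
  have htd : t ^ finrank ℝ E * (t ^ finrank ℝ E)⁻¹ = 1 := mul_inv_cancel₀ (by positivity)
  calc ∫⁻ x in t • A, ENNReal.ofReal (Θ x) ∂μ
      = ENNReal.ofReal (t ^ finrank ℝ E) *
          (ENNReal.ofReal (t ^ finrank ℝ E)⁻¹ * ∫⁻ x in t • A, ENNReal.ofReal (Θ x) ∂μ) := by
        rw [← mul_assoc, ← ENNReal.ofReal_mul (by positivity), htd, ENNReal.ofReal_one, one_mul]
    _ = ENNReal.ofReal (t ^ finrank ℝ E * t ^ (-q)) * ∫⁻ x in A, ENNReal.ofReal (Θ x) ∂μ := by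
        rw [← h, ENNReal.ofReal_mul (by positivity), mul_assoc]
    _ = _ := by rw [Real.rpow_sub ht, Real.rpow_natCast, Real.rpow_neg ht.le, div_eq_mul_inv]

theorem setLIntegral_eq_top_of_homogeneous (hq : q ≤ finrank ℝ E) (hs : MeasurableSet s)
    (hs0 : (0 : E) ∉ s) (hsdil : ∀ l : ℝ, 1 ≤ l → ∀ x ∈ s, l • x ∈ s)
    (hsint : (interior s).Nonempty) (hΘpos : ∀ x ∈ s, 0 < Θ x) (hΘcont : ContinuousOn Θ s)
    (hΘhom : ∀ l : ℝ, 0 < l → ∀ x ∈ s, Θ (l • x) = l ^ (-q) * Θ x) :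
    ∫⁻ x in s, ENNReal.ofReal (Θ x) ∂μ = ∞ := by
  obtain ⟨w, hw⟩ := hsint
  have hw0 : 0 < ‖w‖ := norm_pos_iff.2 fun h => hs0 (h ▸ interior_subset hw)
  set a := 2 / 3 * ‖w‖ with ha
  set A := s ∩ norm ⁻¹' Ico a (2 * a)
  have hA : MeasurableSet A := hs.inter (measurableSet_Ico.preimage measurable_norm)
  have hwA : w ∈ interior A := by
    rw [interior_inter]
    refine ⟨hw, mem_interior_iff_mem_nhds.2 ?_⟩
    exact continuous_norm.continuousAt.preimage_mem_nhds (Ico_mem_nhds (by linarith) (by linarith))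
  have hApos : 0 < ∫⁻ x in A, ENNReal.ofReal (Θ x) ∂μ :=
    setLIntegral_ofReal_pos hA (hΘcont.mono inter_subset_left) (fun x hx => hΘpos x hx.1) ⟨w, hwA⟩
  have hgrow (k : ℕ) :
      ∫⁻ x in A, ENNReal.ofReal (Θ x) ∂μ ≤ ∫⁻ x in (2 : ℝ) ^ k • A, ENNReal.ofReal (Θ x) ∂μ := by
    rw [setLIntegral_smul_set_of_homogeneous μ (by positivity) hA
      fun x hx => hΘhom _ (by positivity) x hx.1]
    exact le_mul_of_one_le_left' <| ENNReal.one_le_ofReal.2 <|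
      Real.one_le_rpow (one_le_pow₀ one_le_two) (sub_nonneg.2 hq)
  have hsub : (⋃ k : ℕ, (2 : ℝ) ^ k • A) ⊆ s := by
    refine iUnion_subset fun k => ?_
    rintro _ ⟨y, hy, rfl⟩
    exact hsdil _ (one_le_pow₀ one_le_two) y hy.1
  refine top_le_iff.1 ?_
  calc ∞ = ∑' _ : ℕ, ∫⁻ x in A, ENNReal.ofReal (Θ x) ∂μ :=
        (ENNReal.tsum_const_eq_top_of_ne_zero hApos.ne').symm
    _ ≤ ∑' k : ℕ, ∫⁻ x in (2 : ℝ) ^ k • A, ENNReal.ofReal (Θ x) ∂μ := ENNReal.tsum_le_tsum hgrow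
    _ = ∫⁻ x in ⋃ k : ℕ, (2 : ℝ) ^ k • A, ENNReal.ofReal (Θ x) ∂μ :=
        (lintegral_iUnion (fun k => hA.const_smul_of_ne_zero (by positivity))
          (pairwise_disjoint_two_pow_smul (by positivity) inter_subset_right) _).symm
    _ ≤ ∫⁻ x in s, ENNReal.ofReal (Θ x) ∂μ := lintegral_mono_set hsub

end Homogeneous

end

theorem IsCPseudoCone.interior_nonempty {n : ℕ} {C E : Set (EuclideanSpace ℝ (Fin n))}
    (hE : IsCPseudoCone C E) (hC : (interior C).Nonempty) : (interior E).Nonempty := by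
  obtain ⟨⟨⟨e, he⟩, -⟩, -, hrec⟩ := hE
  obtain ⟨z, hz⟩ := hC
  refine ⟨e + z, interior_maximal ?_ ((Homeomorph.addLeft e).isOpenMap _ isOpen_interior)
    ⟨z, hz, rfl⟩⟩
  rintro _ ⟨x, hx, rfl⟩
  exact (hrec ▸ interior_subset hx : x ∈ recCone E) e he

theorem stmt7_general {n : ℕ} (C E : Set (EuclideanSpace ℝ (Fin n)))
    (hC : IsPointedClosedConvexCone C) (hE : IsCPseudoCone C E)
    (q : ℝ) (Θ : EuclideanSpace ℝ (Fin n) → ℝ)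
    (hΘpos : ∀ x ∈ C \ {0}, 0 < Θ x)
    (hΘcont : ContinuousOn Θ (C \ {0}))
    (hΘhom : ∀ l : ℝ, 0 < l → ∀ x ∈ C \ {0}, Θ (l • x) = l ^ (-q) * Θ x) :
    ((n : ℝ) < q → ∫⁻ x in E, ENNReal.ofReal (Θ x) ∂volume < ⊤) ∧
    (q ≤ (n : ℝ) → ∫⁻ x in E, ENNReal.ofReal (Θ x) ∂volume = ⊤) := by
  obtain ⟨hCcl, -, hCint, hCcone, -⟩ := hC
  have hEint := hE.interior_nonempty hCint
  obtain ⟨⟨-, hEcl, -, hE0, hEdil⟩, hEC, -⟩ := hE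
  have hEC0 : E ⊆ C \ {0} := fun x hx => ⟨hEC hx, fun h => hE0 (h ▸ hx)⟩
  refine ⟨fun hq => ?_, fun hq => ?_⟩
  · exact setLIntegral_lt_top_of_homogeneous volume hCcl hCcone hΘcont hΘhom
      (by simpa using hq) hEcl hEC hE0
  · exact setLIntegral_eq_top_of_homogeneous volume (by simpa using hq) hEcl.measurableSet hE0
      hEdil hEint (fun x hx => hΘpos x (hEC0 hx)) (hΘcont.mono hEC0)
      (fun l hl x hx => hΘhom l hl x (hEC0 hx))

theorem stmt7 {n : ℕ} (hn : 2 ≤ n) (C E : Set (EuclideanSpace ℝ (Fin n)))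
    (hC : IsPointedClosedConvexCone C) (hE : IsCPseudoCone C E)
    (q : ℝ) (Θ : EuclideanSpace ℝ (Fin n) → ℝ)
    (hΘpos : ∀ x ∈ C \ {0}, 0 < Θ x)
    (hΘcont : ContinuousOn Θ (C \ {0}))
    (hΘhom : ∀ l : ℝ, 0 < l → ∀ x ∈ C \ {0}, Θ (l • x) = l ^ (-q) * Θ x) :
    ((n : ℝ) < q → ∫⁻ x in E, ENNReal.ofReal (Θ x) ∂volume < ⊤) ∧
    (q ≤ (n : ℝ) → ∫⁻ x in E, ENNReal.ofReal (Θ x) ∂volume = ⊤) :=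
  stmt7_general C E hC hE q Θ hΘpos hΘcont hΘhom
end
end

section
/- Let C be a pointed closed convex cone in ℝⁿ with nonempty interior, let q ≥ n, let Θ : C ∖ {0} → (0, ∞) be a continuous function homogeneous of degree −q, and let E be a C-pseudo-cone. Then ∫_{(C ∖ E) ∩ B} Θ(x) dH^n(x) = +∞, where B is the closed Euclidean unit ball; consequently the weighted co-volume ∫_{C ∖ E} Θ(x) dH^n(x) = +∞. -/
open Set MeasureTheory Metric Bornology
open scoped InnerProductSpace ENNReal NNReal Pointwise

noncomputable section

open Module

/-!
Homogeneity reduces everything to the model weight `‖x‖ ^ (-q)`: since `Θ` is positive and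
continuous on the compact set `C ∩ sphere 0 1`, it is bounded below there by some `m > 0`, so
`Θ x ≥ m ‖x‖ ^ (-q)` on `C \ {0}`. As `E` is closed and misses `0`, a small ball
`C ∩ closedBall 0 r` lies in `C \ E`. Cut it into the dyadic shells
`r / 2 ^ (k + 1) < ‖x‖ ≤ r / 2 ^ k`: by scaling, the shell of outer radius `R` has volume
`(1 - 2⁻¹ ^ n) R ^ n · vol (C ∩ B)` with `vol (C ∩ B) > 0`, and the weight there is at least
`m R ^ (-q)`. Each shell thus contributes at least a multiple of `R ^ (n - q) ≥ r ^ (n - q)`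
since `q ≥ n`, and infinitely many equal contributions diverge.
-/

section ConeInBall

variable {F : Type*} [NormedAddCommGroup F] [NormedSpace ℝ F] {C : Set F}

lemma smul_inter_closedBall_one (hC : ∀ t : ℝ, 0 < t → ∀ x ∈ C, t • x ∈ C) {R : ℝ} (hR : 0 < R) :
    R • (C ∩ closedBall 0 1) = C ∩ closedBall 0 R := by
  have hRC : R • C = C := by
    refine (smul_set_subset_iff.2 fun x hx => hC R hR x hx).antisymm ?_
    rw [subset_smul_set_iff₀ hR.ne']
    exact smul_set_subset_iff.2 fun x hx => hC _ (inv_pos.2 hR) x hx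
  rw [smul_set_inter₀ hR.ne', hRC, _root_.smul_closedBall _ _ zero_le_one, smul_zero,
    Real.norm_of_nonneg hR.le, mul_one]

variable [FiniteDimensional ℝ F]

lemma exists_pos_mul_norm_rpow_neg_le (hC : ∀ t : ℝ, 0 < t → ∀ x ∈ C, t • x ∈ C)
    (hCc : IsClosed C) {Θ : F → ℝ} {q : ℝ} (hpos : ∀ x ∈ C \ {0}, 0 < Θ x)
    (hcont : ContinuousOn Θ (C \ {0}))
    (hhom : ∀ t : ℝ, 0 < t → ∀ x ∈ C \ {0}, Θ (t • x) = t ^ (-q) * Θ x) :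
    ∃ m > 0, ∀ x ∈ C \ {0}, m * ‖x‖ ^ (-q) ≤ Θ x := by
  have hS : C ∩ sphere 0 1 ⊆ C \ {0} := fun x hx => ⟨hx.1, ne_of_mem_sphere hx.2 one_ne_zero⟩
  obtain ⟨m, hm, hmΘ⟩ := ((isCompact_sphere 0 1).inter_left hCc).exists_forall_le'
    (hcont.mono hS) fun x hx => hpos x (hS hx)
  refine ⟨m, hm, fun x hx => ?_⟩
  have hx0 : 0 < ‖x‖ := norm_pos_iff.2 hx.2
  set u := ‖x‖⁻¹ • x
  have hu : u ∈ C ∩ sphere 0 1 :=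
    ⟨hC _ (inv_pos.2 hx0) x hx.1, by simp [u, norm_smul, hx0.ne']⟩
  calc m * ‖x‖ ^ (-q) ≤ Θ u * ‖x‖ ^ (-q) := by gcongr; exact hmΘ u hu
    _ = Θ (‖x‖ • u) := by rw [hhom _ hx0 u (hS hu), mul_comm]
    _ = Θ x := by rw [smul_inv_smul₀ hx0.ne']

variable [MeasurableSpace F] [BorelSpace F] (μ : Measure F) [μ.IsAddHaarMeasure]

lemma addHaar_inter_closedBall (hC : ∀ t : ℝ, 0 < t → ∀ x ∈ C, t • x ∈ C) {R : ℝ}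
    (hR : 0 < R) :
    μ (C ∩ closedBall 0 R) = ENNReal.ofReal (R ^ finrank ℝ F) * μ (C ∩ closedBall 0 1) := by
  rw [← smul_inter_closedBall_one hC hR, Measure.addHaar_smul_of_nonneg μ hR.le]

lemma addHaar_inter_closedBall_one_ne_zero (hC : ∀ t : ℝ, 0 < t → ∀ x ∈ C, t • x ∈ C)
    (hint : (interior C).Nonempty) : μ (C ∩ closedBall 0 1) ≠ 0 := by
  obtain ⟨x, hx⟩ := hint
  have hR : 0 < ‖x‖ + 1 := by positivity
  have hpos : 0 < μ (C ∩ closedBall 0 (‖x‖ + 1)) :=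
    ((isOpen_interior.inter isOpen_ball).measure_pos μ
      ⟨x, hx, mem_ball_zero_iff.2 (lt_add_one _)⟩).trans_le
      (measure_mono (inter_subset_inter interior_subset ball_subset_closedBall))
  rw [addHaar_inter_closedBall μ hC hR] at hpos
  exact right_ne_zero_of_mul hpos.ne'

lemma le_setLIntegral_inter_closedBall_diff_closedBall_half
    (hC : ∀ t : ℝ, 0 < t → ∀ x ∈ C, t • x ∈ C) (hCm : MeasurableSet C) {Θ : F → ℝ}
    {m q : ℝ} (hm : 0 < m) (hq : 0 ≤ q) (hΘ : ∀ x ∈ C \ {0}, m * ‖x‖ ^ (-q) ≤ Θ x) {R : ℝ}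
    (hR : 0 < R) :
    ENNReal.ofReal (m * (1 - 2⁻¹ ^ finrank ℝ F) * R ^ ((finrank ℝ F : ℝ) - q)) *
        μ (C ∩ closedBall 0 1)
      ≤ ∫⁻ x in (C ∩ closedBall 0 R) \ closedBall 0 (R / 2), ENNReal.ofReal (Θ x) ∂μ := by
  set d := finrank ℝ F
  set A := (C ∩ closedBall 0 R) \ closedBall 0 (R / 2)
  have hfin : μ (C ∩ closedBall 0 1) ≠ ⊤ :=
    ((measure_mono inter_subset_right).trans_lt measure_closedBall_lt_top).ne
  have hvol : ENNReal.ofReal ((1 - 2⁻¹ ^ d) * R ^ d) * μ (C ∩ closedBall 0 1) ≤ μ A :=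
    calc _ = μ (C ∩ closedBall 0 R) - μ (C ∩ closedBall 0 (R / 2)) := by
          rw [addHaar_inter_closedBall μ hC hR, addHaar_inter_closedBall μ hC (half_pos hR),
            ← ENNReal.sub_mul (fun _ _ => hfin), ← ENNReal.ofReal_sub _ (by positivity)]
          congr 2
          rw [div_pow, inv_pow]
          ring
      _ ≤ μ ((C ∩ closedBall 0 R) \ (C ∩ closedBall 0 (R / 2))) := le_measure_sdiff
      _ ≤ μ A := measure_mono fun x ⟨hxR, hx⟩ => ⟨hxR, fun h => hx ⟨hxR.1, h⟩⟩
  have hbound : ∀ x ∈ A, ENNReal.ofReal (m * R ^ (-q)) ≤ ENNReal.ofReal (Θ x) := by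
    rintro x ⟨⟨hxC, hxR⟩, hx⟩
    rw [mem_closedBall_zero_iff] at hxR hx
    have hx0 : 0 < ‖x‖ := by linarith [not_le.1 hx]
    refine ENNReal.ofReal_le_ofReal (le_trans ?_ (hΘ x ⟨hxC, norm_pos_iff.1 hx0⟩))
    exact mul_le_mul_of_nonneg_left (Real.rpow_le_rpow_of_nonpos hx0 hxR (neg_nonpos.2 hq)) hm.le
  calc _ = ENNReal.ofReal (m * R ^ (-q)) *
        (ENNReal.ofReal ((1 - 2⁻¹ ^ d) * R ^ d) * μ (C ∩ closedBall 0 1)) := by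
        rw [← mul_assoc, ← ENNReal.ofReal_mul (by positivity), Real.rpow_sub hR,
          Real.rpow_neg hR.le, Real.rpow_natCast]
        ring_nf
    _ ≤ ENNReal.ofReal (m * R ^ (-q)) * μ A := by gcongr
    _ = ∫⁻ _ in A, ENNReal.ofReal (m * R ^ (-q)) ∂μ := (setLIntegral_const _ _).symm
    _ ≤ _ := setLIntegral_mono' ((hCm.inter measurableSet_closedBall).diff
        measurableSet_closedBall) hbound

lemma setLIntegral_inter_closedBall_eq_top [Nontrivial F]
    (hC : ∀ t : ℝ, 0 < t → ∀ x ∈ C, t • x ∈ C) (hCm : MeasurableSet C)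
    (hint : (interior C).Nonempty) {Θ : F → ℝ} {m q : ℝ} (hm : 0 < m)
    (hq : (finrank ℝ F : ℝ) ≤ q) (hΘ : ∀ x ∈ C \ {0}, m * ‖x‖ ^ (-q) ≤ Θ x) {r : ℝ}
    (hr : 0 < r) :
    ∫⁻ x in C ∩ closedBall 0 r, ENNReal.ofReal (Θ x) ∂μ = ⊤ := by
  set d := finrank ℝ F
  set R : ℕ → ℝ := fun k => r / 2 ^ k
  set A : ℕ → Set F := fun k => (C ∩ closedBall 0 (R k)) \ closedBall 0 (R k / 2)
  have hRpos (k : ℕ) : 0 < R k := by positivity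
  have hRle (k : ℕ) : R k ≤ r := div_le_self hr.le (one_le_pow₀ one_le_two)
  have hRanti : Antitone R := fun i j hij =>
    div_le_div_of_nonneg_left hr.le (by positivity) (pow_le_pow_right₀ one_le_two hij)
  have hA (k : ℕ) : A k ⊆ norm ⁻¹' Ioc (R (k + 1)) (R k) := by
    rintro x ⟨⟨-, hxR⟩, hx⟩
    rw [mem_closedBall_zero_iff, not_le] at hx
    rw [mem_closedBall_zero_iff] at hxR
    exact ⟨by simpa [R, pow_succ, div_div] using hx, hxR⟩
  have hdisj : Pairwise (Function.onFun Disjoint A) := fun i j hij =>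
    ((hRanti.pairwise_disjoint_on_Ioc_succ hij).preimage norm).mono (hA i) (hA j)
  have hAm (k : ℕ) : MeasurableSet (A k) :=
    (hCm.inter measurableSet_closedBall).diff measurableSet_closedBall
  have hAsub : (⋃ k, A k) ⊆ C ∩ closedBall 0 r :=
    iUnion_subset fun k x hx => ⟨hx.1.1, closedBall_subset_closedBall (hRle k) hx.1.2⟩
  set c := ENNReal.ofReal (m * (1 - 2⁻¹ ^ d) * r ^ ((d : ℝ) - q)) * μ (C ∩ closedBall 0 1)
  have hc : c ≠ 0 := by
    have h2 : (2⁻¹ : ℝ) ^ d < 1 := pow_lt_one₀ (by norm_num) (by norm_num) finrank_pos.ne'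
    refine mul_ne_zero ?_ (addHaar_inter_closedBall_one_ne_zero μ hC hint)
    exact (ENNReal.ofReal_pos.2
      (mul_pos (mul_pos hm (sub_pos.2 h2)) (Real.rpow_pos_of_pos hr _))).ne'
  have hterm (k : ℕ) : c ≤ ∫⁻ x in A k, ENNReal.ofReal (Θ x) ∂μ := by
    refine le_trans ?_ (le_setLIntegral_inter_closedBall_diff_closedBall_half μ hC hCm hm
      (d.cast_nonneg.trans hq) hΘ (hRpos k))
    have h2 : (2⁻¹ : ℝ) ^ d ≤ 1 := pow_le_one₀ (by norm_num) (by norm_num)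
    refine mul_le_mul_left (ENNReal.ofReal_le_ofReal (mul_le_mul_of_nonneg_left ?_ ?_)) _
    · exact Real.rpow_le_rpow_of_nonpos (hRpos k) (hRle k) (by linarith)
    · exact mul_nonneg hm.le (sub_nonneg.2 h2)
  refine top_unique ?_
  calc ⊤ = ∑' _ : ℕ, c := (ENNReal.tsum_const_eq_top_of_ne_zero hc).symm
    _ ≤ ∑' k, ∫⁻ x in A k, ENNReal.ofReal (Θ x) ∂μ := ENNReal.tsum_le_tsum hterm
    _ = ∫⁻ x in ⋃ k, A k, ENNReal.ofReal (Θ x) ∂μ := (lintegral_iUnion hAm hdisj _).symm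
    _ ≤ _ := lintegral_mono_set hAsub

end ConeInBall

theorem stmt8_general {n : ℕ} (C E : Set (EuclideanSpace ℝ (Fin n)))
    (hC : IsPointedClosedConvexCone C) (hE : IsCPseudoCone C E)
    (q : ℝ) (hq : (n : ℝ) ≤ q) (Θ : EuclideanSpace ℝ (Fin n) → ℝ)
    (hΘpos : ∀ x ∈ C \ {0}, 0 < Θ x)
    (hΘcont : ContinuousOn Θ (C \ {0}))
    (hΘhom : ∀ l : ℝ, 0 < l → ∀ x ∈ C \ {0}, Θ (l • x) = l ^ (-q) * Θ x) :
    (∫⁻ x in (C \ E) ∩ closedBall (0 : EuclideanSpace ℝ (Fin n)) 1,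
        ENNReal.ofReal (Θ x) ∂volume = ⊤) ∧
    ∫⁻ x in C \ E, ENNReal.ofReal (Θ x) ∂volume = ⊤ := by
  obtain ⟨hCclosed, -, hCint, hCcone, -⟩ := hC
  obtain ⟨⟨⟨x₀, hx₀⟩, hEclosed, -, hE0, -⟩, -, -⟩ := hE
  have hcone : ∀ t : ℝ, 0 < t → ∀ x ∈ C, t • x ∈ C := fun t ht => hCcone t ht.le
  have : Nontrivial (EuclideanSpace ℝ (Fin n)) :=
    nontrivial_of_ne x₀ 0 (ne_of_mem_of_not_mem hx₀ hE0)
  obtain ⟨m, hm, hΘm⟩ := exists_pos_mul_norm_rpow_neg_le hcone hCclosed hΘpos hΘcont hΘhom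
  obtain ⟨ε, hε, hεE⟩ := Metric.mem_nhds_iff.1 (hEclosed.isOpen_compl.mem_nhds hE0)
  have hr : 0 < min (ε / 2) 1 := by positivity
  have hsub : C ∩ closedBall 0 (min (ε / 2) 1) ⊆ (C \ E) ∩ closedBall 0 1 := fun x hx =>
    ⟨⟨hx.1, hεE (closedBall_subset_ball ((min_le_left _ _).trans_lt (half_lt_self hε)) hx.2)⟩,
      closedBall_subset_closedBall (min_le_right _ _) hx.2⟩
  have hball : ∫⁻ x in (C \ E) ∩ closedBall 0 1, ENNReal.ofReal (Θ x) = ⊤ := top_unique <|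
    (setLIntegral_inter_closedBall_eq_top volume hcone hCclosed.measurableSet hCint hm
      (by rwa [finrank_euclideanSpace_fin]) hΘm hr).symm.le.trans (lintegral_mono_set hsub)
  exact ⟨hball, top_unique (hball ▸ lintegral_mono_set inter_subset_left)⟩

theorem stmt8 {n : ℕ} (hn : 2 ≤ n) (C E : Set (EuclideanSpace ℝ (Fin n)))
    (hC : IsPointedClosedConvexCone C) (hE : IsCPseudoCone C E)
    (q : ℝ) (hq : (n : ℝ) ≤ q) (Θ : EuclideanSpace ℝ (Fin n) → ℝ)
    (hΘpos : ∀ x ∈ C \ {0}, 0 < Θ x)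
    (hΘcont : ContinuousOn Θ (C \ {0}))
    (hΘhom : ∀ l : ℝ, 0 < l → ∀ x ∈ C \ {0}, Θ (l • x) = l ^ (-q) * Θ x) :
    (∫⁻ x in (C \ E) ∩ closedBall (0 : EuclideanSpace ℝ (Fin n)) 1,
        ENNReal.ofReal (Θ x) ∂volume = ⊤) ∧
    ∫⁻ x in C \ E, ENNReal.ofReal (Θ x) ∂volume = ⊤ :=
  stmt8_general C E hC hE q hq Θ hΘpos hΘcont hΘhom
end
end
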